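/- Gumbel-max trick: if G_1,...,G_m are i.i.d. standard Gumbel random variables (with CDF exp(−exp(−t))) and a_1,...,a_m are real numbers, then P(argmax_k (a_k + G_k) = j) = exp(a_j)/∑_{k=1}^m exp(a_k). -/

import Mathlib

/-!
Write `F t = exp (-exp (-t))` for the standard Gumbel distribution function. Since
`F (t + b) = F t ^ exp (-b)`, conditioning on `G j = x` gives probability
`∏_{k ≠ j} F (x + a j - a k) = F x ^ c` with `c = ∑_{k ≠ j} exp (a k - a j)`, and integrating
against the density `F'` gives `∫ F ^ c F' = 1 / (1 + c) = exp (a j) / ∑_k exp (a k)`.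
-/

open MeasureTheory ProbabilityTheory Set Filter Real Topology

namespace ProbabilityTheory

/-- For `c > 0`, the distribution function of the Gumbel law with location `log c`, i.e. the
`c`-th power of the standard one. -/
noncomputable def gumbelCDF (c t : ℝ) : ℝ := exp (-(c * exp (-t)))

noncomputable def gumbelPDF (c t : ℝ) : ℝ := c * exp (-t) * gumbelCDF c t

noncomputable def gumbelMeasure : Measure ℝ :=
  volume.withDensity fun t ↦ ENNReal.ofReal (gumbelPDF 1 t)

lemma gumbelCDF_add (b c t : ℝ) : gumbelCDF (b + c) t = gumbelCDF b t * gumbelCDF c t := by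
  simp only [gumbelCDF, ← exp_add]; ring_nf

lemma prod_gumbelCDF {ι : Type*} (s : Finset ι) (c : ι → ℝ) (t : ℝ) :
    ∏ k ∈ s, gumbelCDF (c k) t = gumbelCDF (∑ k ∈ s, c k) t := by
  simp only [gumbelCDF, ← exp_sum, Finset.sum_mul, Finset.sum_neg_distrib]

lemma gumbelCDF_one_add (b t : ℝ) : gumbelCDF 1 (b + t) = gumbelCDF (exp (-b)) t := by
  simp only [gumbelCDF, one_mul, ← exp_add, neg_add]

lemma gumbelPDF_one_mul_gumbelCDF {c : ℝ} (hc : 1 + c ≠ 0) (t : ℝ) :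
    gumbelPDF 1 t * gumbelCDF c t = gumbelPDF (1 + c) t / (1 + c) := by
  simp only [gumbelPDF, gumbelCDF_add]
  field_simp

lemma gumbelCDF_pos (c t : ℝ) : 0 < gumbelCDF c t := exp_pos _

lemma gumbelPDF_nonneg {c : ℝ} (hc : 0 ≤ c) (t : ℝ) : 0 ≤ gumbelPDF c t := by
  unfold gumbelPDF gumbelCDF; positivity

lemma hasDerivAt_gumbelCDF (c t : ℝ) : HasDerivAt (gumbelCDF c) (gumbelPDF c t) t := by
  refine (((hasDerivAt_neg' t).exp.const_mul c).neg).exp.congr_deriv ?_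
  simp only [gumbelPDF, gumbelCDF, Pi.neg_apply]; ring

lemma continuous_gumbelPDF (c : ℝ) : Continuous (gumbelPDF c) := by
  unfold gumbelPDF gumbelCDF; fun_prop

lemma tendsto_gumbelCDF_atBot {c : ℝ} (hc : 0 < c) : Tendsto (gumbelCDF c) atBot (𝓝 0) :=
  tendsto_exp_atBot.comp <| tendsto_neg_atTop_atBot.comp <|
    (tendsto_exp_atTop.comp tendsto_neg_atBot_atTop).const_mul_atTop hc

lemma tendsto_gumbelCDF_atTop (c : ℝ) : Tendsto (gumbelCDF c) atTop (𝓝 1) := by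
  have : Tendsto (fun t ↦ -(c * exp (-t))) atTop (𝓝 (-(c * 0))) :=
    ((tendsto_exp_atBot.comp tendsto_neg_atTop_atBot).const_mul c).neg
  have h := (continuous_exp.tendsto _).comp this
  rwa [mul_zero, neg_zero, exp_zero] at h

-- With `x = c e^{-t}`, `gumbelPDF c t = x e^{-x} ≤ 2 / x` because `x ^ 2 / 2 ≤ e^x`.
lemma gumbelPDF_le {c : ℝ} (hc : 0 < c) (t : ℝ) : gumbelPDF c t ≤ 2 / c * exp t := by
  set x := c * exp (-t) with hx
  have hx0 : 0 < x := by positivity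
  have hquad : x ^ 2 / 2 ≤ exp x := by nlinarith [quadratic_le_exp_of_nonneg hx0.le]
  calc gumbelPDF c t = x / exp x := by rw [gumbelPDF, gumbelCDF, exp_neg x, ← hx, div_eq_mul_inv]
    _ ≤ x / (x ^ 2 / 2) := div_le_div_of_nonneg_left hx0.le (by positivity) hquad
    _ = 2 / c * exp t := by rw [hx, exp_neg]; field_simp

lemma integrable_gumbelPDF {c : ℝ} (hc : 0 < c) : Integrable (gumbelPDF c) := by
  have hIic : IntegrableOn (gumbelPDF c) (Iic 0) := by
    refine ((integrableOn_exp_Iic 0).const_mul (2 / c)).mono'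
      (continuous_gumbelPDF c).aestronglyMeasurable.restrict ?_
    filter_upwards with t
    rw [norm_of_nonneg (gumbelPDF_nonneg hc.le t)]
    exact gumbelPDF_le hc t
  have hIoi : IntegrableOn (gumbelPDF c) (Ioi 0) :=
    integrableOn_Ioi_deriv_of_nonneg' (fun t _ ↦ hasDerivAt_gumbelCDF c t)
      (fun t _ ↦ gumbelPDF_nonneg hc.le t) (tendsto_gumbelCDF_atTop c)
  rw [← integrableOn_univ, ← Iic_union_Ioi (a := 0)]
  exact hIic.union hIoi

lemma lintegral_gumbelPDF {c : ℝ} (hc : 0 < c) :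
    ∫⁻ t, ENNReal.ofReal (gumbelPDF c t) = 1 := by
  rw [← ofReal_integral_eq_lintegral_ofReal (integrable_gumbelPDF hc)
      (.of_forall (gumbelPDF_nonneg hc.le)),
    integral_of_hasDerivAt_of_tendsto (hasDerivAt_gumbelCDF c) (integrable_gumbelPDF hc)
      (tendsto_gumbelCDF_atBot hc) (tendsto_gumbelCDF_atTop c), sub_zero, ENNReal.ofReal_one]

instance : IsProbabilityMeasure gumbelMeasure :=
  ⟨by rw [gumbelMeasure, withDensity_apply _ .univ, Measure.restrict_univ,
    lintegral_gumbelPDF one_pos]⟩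

lemma gumbelMeasure_Iic (t : ℝ) : gumbelMeasure (Iic t) = ENNReal.ofReal (gumbelCDF 1 t) := by
  have hint := (integrable_gumbelPDF one_pos).integrableOn (s := Iic t)
  rw [gumbelMeasure, withDensity_apply _ measurableSet_Iic,
    ← ofReal_integral_eq_lintegral_ofReal hint (.of_forall (gumbelPDF_nonneg zero_le_one)),
    integral_Iic_of_hasDerivAt_of_tendsto' (fun x _ ↦ hasDerivAt_gumbelCDF 1 x) hint
      (tendsto_gumbelCDF_atBot one_pos), sub_zero]

lemma gumbelMeasure_Iio (t : ℝ) : gumbelMeasure (Iio t) = ENNReal.ofReal (gumbelCDF 1 t) := by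
  rw [← gumbelMeasure_Iic]
  exact measure_congr ((withDensity_absolutelyContinuous _ _).ae_eq Iio_ae_eq_Iic)

lemma lintegral_gumbelCDF_gumbelMeasure {c : ℝ} (hc : 0 ≤ c) :
    ∫⁻ t, ENNReal.ofReal (gumbelCDF c t) ∂gumbelMeasure = ENNReal.ofReal (1 / (1 + c)) := by
  have hc' : 0 < 1 + c := by linarith
  have hmeas : Measurable fun t ↦ ENNReal.ofReal (gumbelPDF 1 t) :=
    (continuous_gumbelPDF 1).measurable.ennreal_ofReal
  calc ∫⁻ t, ENNReal.ofReal (gumbelCDF c t) ∂gumbelMeasure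
      = ∫⁻ t, ENNReal.ofReal (1 / (1 + c)) * ENNReal.ofReal (gumbelPDF (1 + c) t) := by
        rw [gumbelMeasure, lintegral_withDensity_eq_lintegral_mul₀ hmeas.aemeasurable
          (by unfold gumbelCDF; fun_prop)]
        congr with t
        rw [Pi.mul_apply, ← ENNReal.ofReal_mul (gumbelPDF_nonneg zero_le_one t),
          gumbelPDF_one_mul_gumbelCDF hc'.ne', ← ENNReal.ofReal_mul (by positivity),
          one_div_mul_eq_div]
    _ = ENNReal.ofReal (1 / (1 + c)) := by
        rw [lintegral_const_mul _ (continuous_gumbelPDF _).measurable.ennreal_ofReal,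
          lintegral_gumbelPDF hc', mul_one]

lemma map_eq_gumbelMeasure {Ω : Type*} [MeasurableSpace Ω] {P : Measure Ω} {X : Ω → ℝ}
    (hX : Measurable X) (hcdf : ∀ t, P {ω | X ω ≤ t} = ENNReal.ofReal (gumbelCDF 1 t)) :
    P.map X = gumbelMeasure :=
  (Measure.ext_of_Iic _ _ fun t ↦ by
    rw [gumbelMeasure_Iic, Measure.map_apply hX measurableSet_Iic, ← hcdf]; rfl).symm

end ProbabilityTheory

lemma Real.exp_div_sum_exp {ι : Type*} [Fintype ι] [DecidableEq ι] (a : ι → ℝ) (j : ι) :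
    exp (a j) / ∑ k, exp (a k) = 1 / (1 + ∑ k ∈ Finset.univ.erase j, exp (a k - a j)) := by
  have hsum :
      ∑ k, exp (a k) = exp (a j) * (1 + ∑ k ∈ Finset.univ.erase j, exp (a k - a j)) := by
    rw [← Finset.add_sum_erase _ _ (Finset.mem_univ j), mul_add, mul_one, Finset.mul_sum]
    simp only [← exp_add, add_sub_cancel]
  have hpos : 0 < 1 + ∑ k ∈ Finset.univ.erase j, exp (a k - a j) := by positivity
  rw [hsum]
  field_simp

namespace ProbabilityTheory.iIndepFun

variable {Ω ι : Type*} [MeasurableSpace Ω] {P : Measure Ω} {G : ι → Ω → ℝ}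

lemma measure_forall_lt (hindep : iIndepFun G P) (s : Finset ι) (t : ι → ℝ) :
    P {ω | ∀ k ∈ s, G k ω < t k} = ∏ k ∈ s, P {ω | G k ω < t k} := by
  have hset : {ω | ∀ k ∈ s, G k ω < t k} = ⋂ k ∈ s, G k ⁻¹' Iio (t k) := by ext; simp
  rw [hset, hindep.meas_biInter fun k _ ↦ ⟨Iio (t k), measurableSet_Iio, rfl⟩]
  rfl

-- Conditioning on `G j`, which is independent of the vector `(G k)_{k ∈ s}`.
lemma measure_forall_lt_add_eq_lintegral [IsProbabilityMeasure P] (hindep : iIndepFun G P)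
    (hmeas : ∀ k, Measurable (G k)) {s : Finset ι} {j : ι} (hj : j ∉ s) (b : ι → ℝ) :
    P {ω | ∀ k ∈ s, G k ω < b k + G j ω} =
      ∫⁻ x, P {ω | ∀ k ∈ s, G k ω < b k + x} ∂(P.map (G j)) := by
  set V : Ω → s → ℝ := fun ω k ↦ G k ω
  have hV : Measurable V := measurable_pi_lambda _ fun k ↦ hmeas k
  have hindep' : IndepFun (G j) V P :=
    (hindep.indepFun_finset {j} s (Finset.disjoint_singleton_left.2 hj) hmeas).comp
      (measurable_pi_apply (⟨j, Finset.mem_singleton_self j⟩ : ({j} : Finset ι)))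
      measurable_id
  set A : Set (ℝ × (s → ℝ)) := {p | ∀ k : s, p.2 k < b k + p.1}
  have hA : MeasurableSet A := by
    simp only [A, ofPred_forall]
    exact .iInter fun k ↦ measurableSet_lt (by fun_prop) (by fun_prop)
  calc P {ω | ∀ k ∈ s, G k ω < b k + G j ω} = P ((fun ω ↦ (G j ω, V ω)) ⁻¹' A) := by
        congr 1; ext; simp [A, V]
    _ = ((P.map (G j)).prod (P.map V)) A := by
        rw [← Measure.map_apply ((hmeas j).prodMk hV) hA,
          (indepFun_iff_map_prod_eq_prod_map_map (hmeas j).aemeasurable hV.aemeasurable).1 hindep']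
    _ = ∫⁻ x, P.map V (Prod.mk x ⁻¹' A) ∂(P.map (G j)) := Measure.prod_apply hA
    _ = ∫⁻ x, P {ω | ∀ k ∈ s, G k ω < b k + x} ∂(P.map (G j)) := by
        congr with x
        rw [Measure.map_apply hV (measurable_prodMk_left hA)]
        congr 1; ext; simp [A, V]

-- The event is `{max_{k ∈ s} (G k - b k) < x}`: a maximum of shifted independent Gumbel
-- variables is Gumbel.
lemma measure_forall_lt_add_of_map_eq_gumbelMeasure (hindep : iIndepFun G P)
    (hgumbel : ∀ k, P.map (G k) = gumbelMeasure) (hmeas : ∀ k, Measurable (G k))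
    (s : Finset ι) (b : ι → ℝ) (x : ℝ) :
    P {ω | ∀ k ∈ s, G k ω < b k + x} =
      ENNReal.ofReal (gumbelCDF (∑ k ∈ s, exp (-b k)) x) := by
  rw [hindep.measure_forall_lt, ← prod_gumbelCDF,
    ENNReal.ofReal_prod_of_nonneg fun k _ ↦ (gumbelCDF_pos _ _).le]
  refine Finset.prod_congr rfl fun k _ ↦ ?_
  rw [← gumbelCDF_one_add, ← gumbelMeasure_Iio, ← hgumbel k,
    Measure.map_apply (hmeas k) measurableSet_Iio]
  rfl

end ProbabilityTheory.iIndepFun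

theorem gumbel_max_trick_general
    {Ω : Type*} [MeasurableSpace Ω] (P : Measure Ω) [IsProbabilityMeasure P]
    {m : ℕ} (G : Fin m → Ω → ℝ)
    (hmeas : ∀ k, Measurable (G k))
    (hindep : iIndepFun G P)
    (hcdf : ∀ k (t : ℝ),
      P {ω | G k ω ≤ t} = ENNReal.ofReal (Real.exp (-Real.exp (-t))))
    (a : Fin m → ℝ) (j : Fin m) :
    P {ω | ∀ k, k ≠ j → a k + G k ω < a j + G j ω} =
      ENNReal.ofReal (Real.exp (a j) / ∑ k, Real.exp (a k)) := by
  have hgumbel (k : Fin m) : P.map (G k) = gumbelMeasure :=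
    map_eq_gumbelMeasure (hmeas k) fun t ↦ by rw [hcdf, gumbelCDF, one_mul]
  have hevent : {ω | ∀ k, k ≠ j → a k + G k ω < a j + G j ω} =
      {ω | ∀ k ∈ Finset.univ.erase j, G k ω < (a j - a k) + G j ω} := by
    ext ω
    simp only [mem_ofPred_eq, Finset.mem_erase, Finset.mem_univ, and_true]
    exact forall₂_congr fun k _ ↦ by constructor <;> intro h <;> linarith
  rw [hevent, hindep.measure_forall_lt_add_eq_lintegral hmeas (Finset.notMem_erase j _), hgumbel]
  simp only [hindep.measure_forall_lt_add_of_map_eq_gumbelMeasure hgumbel hmeas, neg_sub]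
  rw [lintegral_gumbelCDF_gumbelMeasure (by positivity), exp_div_sum_exp]

/-- Gumbel-max trick: if `G₁,…,G_m` are i.i.d. standard Gumbel random variables
(CDF `exp(−exp(−t))`) and `a₁,…,a_m` are reals, then the probability that
`a_j + G_j` is the (almost surely unique) maximum of the `a_k + G_k` equals
`exp(a_j) / ∑_k exp(a_k)`. -/
theorem gumbel_max_trick
    {Ω : Type*} [MeasurableSpace Ω] (P : Measure Ω) [IsProbabilityMeasure P]
    {m : ℕ} (hm : 1 ≤ m) (G : Fin m → Ω → ℝ)
    (hmeas : ∀ k, Measurable (G k))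
    (hindep : iIndepFun G P)
    (hcdf : ∀ k (t : ℝ),
      P {ω | G k ω ≤ t} = ENNReal.ofReal (Real.exp (-Real.exp (-t))))
    (a : Fin m → ℝ) (j : Fin m) :
    P {ω | ∀ k, k ≠ j → a k + G k ω < a j + G j ω} =
      ENNReal.ofReal (Real.exp (a j) / ∑ k, Real.exp (a k)) :=
  gumbel_max_trick_general P G hmeas hindep hcdf a j
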